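/- Let (L, ∘_λ, [·_λ ·]) be a transposed Poisson conformal superalgebra and let h ∈ L₀ be an even element. Define the even linear map α_h : L → L by α_h(x) = h ∘_(0) x := (h ∘_λ x)|_{λ=0}. Then (L, [·_λ ·], α_h) is a Hom-Lie conformal superalgebra; in particular α_h commutes with ∂ and the Hom-Jacobi identity [α_h(a)_λ [b_μ c]] = [[a_λ b]_{λ+μ} α_h(c)] + (−1)^{|a||b|}[α_h(b)_μ [a_λ c]] holds for all homogeneous a, b, c ∈ L. -/

import Mathlib

open Polynomial
open scoped TensorProduct

noncomputable section

namespace TPCSAFormal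

/-- The super-sign `(-1)^{i·j}` for parities `i, j ∈ ℤ/2ℤ`. -/
def sgn (i j : ZMod 2) : ℂ := (-1 : ℂ) ^ (i.val * j.val)

variable (L : Type*) [AddCommGroup L] [Module ℂ L]
  [Module (Polynomial ℂ) L] [IsScalarTower ℂ (Polynomial ℂ) L]

/-- A conformal `λ`-product on the `ℂ[∂]`-module `L`, recorded by its family of `n`-th
product coefficients: `a ∘_λ b = ∑_n λ^n • coeff n a b`, with finitely many nonzero terms.
This is exactly the data of a `ℂ`-bilinear map `L ⊗ L → ℂ[λ] ⊗ L`. -/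
structure ConformalProduct where
  coeff : ℕ → L →ₗ[ℂ] L →ₗ[ℂ] L
  coeff_finite : ∀ a b : L, ∃ N : ℕ, ∀ n : ℕ, N ≤ n → coeff n a b = 0

variable {L}

/-- The value `a ∘_λ b` of the `λ`-product at `λ ∈ ℂ`.  Since `ℂ` is infinite, identities
between such values for all `λ` are equivalent to the corresponding polynomial identities. -/
def ConformalProduct.mul (m : ConformalProduct L) (lam : ℂ) (a b : L) : L :=
  ∑ᶠ n : ℕ, lam ^ n • m.coeff n a b

/-- The value `a ∘_{-∂-λ} b`, where `∂` acts on `L` as scalar multiplication by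
`X ∈ ℂ[∂]` (the variable `λ` being replaced by the operator `-∂-λ`). -/
def ConformalProduct.cmul (m : ConformalProduct L) (lam : ℂ) (a b : L) : L :=
  ∑ᶠ n : ℕ, ((-((X : Polynomial ℂ) + C lam)) ^ n) • m.coeff n a b

variable (L) in
/-- A `ℤ₂`-grading on `L` making it a `ℤ₂`-graded `ℂ[∂]`-module: `L = L₀ ⊕ L₁` with
`∂ L_i ⊆ L_i`, where `∂` acts as multiplication by `X ∈ ℂ[∂]`. -/
structure SuperModule where
  grade : ZMod 2 → Submodule ℂ L
  isInternal : DirectSum.IsInternal grade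
  X_smul_mem : ∀ (i : ZMod 2) (a : L), a ∈ grade i → (X : Polynomial ℂ) • a ∈ grade i

/-- `m` is an even `λ`-product on the `ℤ₂`-graded `ℂ[∂]`-module `(L, S)`:
it is even with respect to the grading and conformally sesquilinear. -/
structure IsLambdaProduct (S : SuperModule L) (m : ConformalProduct L) : Prop where
  even : ∀ (i j : ZMod 2) (a b : L), a ∈ S.grade i → b ∈ S.grade j →
    ∀ n : ℕ, m.coeff n a b ∈ S.grade (i + j)
  sesq_left : ∀ (lam : ℂ) (a b : L),
    m.mul lam ((X : Polynomial ℂ) • a) b = (-lam) • m.mul lam a b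
  sesq_right : ∀ (lam : ℂ) (a b : L),
    m.mul lam a ((X : Polynomial ℂ) • b) =
      (X : Polynomial ℂ) • m.mul lam a b + lam • m.mul lam a b

/-- `(L, S, m)` is a commutative associative conformal superalgebra. -/
structure IsCommAssoc (S : SuperModule L) (m : ConformalProduct L)
    extends IsLambdaProduct S m : Prop where
  comm : ∀ (i j : ZMod 2) (a b : L), a ∈ S.grade i → b ∈ S.grade j →
    ∀ lam : ℂ, m.mul lam a b = sgn i j • m.cmul lam b a
  assoc : ∀ (lam mu : ℂ) (a b c : L),
    m.mul lam a (m.mul mu b c) = m.mul (lam + mu) (m.mul lam a b) c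

/-- `(L, S, br)` is a Lie conformal superalgebra. -/
structure IsLie (S : SuperModule L) (br : ConformalProduct L)
    extends IsLambdaProduct S br : Prop where
  skew : ∀ (i j : ZMod 2) (a b : L), a ∈ S.grade i → b ∈ S.grade j →
    ∀ lam : ℂ, br.mul lam a b = -(sgn i j • br.cmul lam b a)
  jacobi : ∀ (i j : ZMod 2) (a b : L), a ∈ S.grade i → b ∈ S.grade j →
    ∀ (c : L) (lam mu : ℂ),
      br.mul lam a (br.mul mu b c) =
        br.mul (lam + mu) (br.mul lam a b) c + sgn i j • br.mul mu b (br.mul lam a c)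

/-- `(L, S, m, br)` is a transposed Poisson conformal superalgebra. -/
structure IsTPCSA (S : SuperModule L) (m br : ConformalProduct L) : Prop where
  commAssoc : IsCommAssoc S m
  lie : IsLie S br
  transposedLeibniz : ∀ (i j : ZMod 2) (a b : L), a ∈ S.grade i → b ∈ S.grade j →
    ∀ (c : L) (lam mu : ℂ),
      (2 : ℂ) • m.mul lam a (br.mul mu b c) =
        br.mul (lam + mu) (m.mul lam a b) c + sgn i j • br.mul mu b (m.mul lam a c)

/-- `(L, S, m, br)` is a Poisson conformal superalgebra. -/
structure IsPCSA (S : SuperModule L) (m br : ConformalProduct L) : Prop where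
  commAssoc : IsCommAssoc S m
  lie : IsLie S br
  leibniz : ∀ (i j : ZMod 2) (a b : L), a ∈ S.grade i → b ∈ S.grade j →
    ∀ (c : L) (lam mu : ℂ),
      br.mul lam a (m.mul mu b c) =
        m.mul (lam + mu) (br.mul lam a b) c + sgn i j • m.mul mu b (br.mul lam a c)

/-- `(L, S, br, α)` is a Hom-Lie conformal superalgebra. -/
structure IsHomLie (S : SuperModule L) (br : ConformalProduct L) (α : L → L)
    extends IsLambdaProduct S br : Prop where
  map_smul_add : ∀ (c : ℂ) (a b : L), α (c • a + b) = c • α a + α b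
  map_grade : ∀ (i : ZMod 2) (a : L), a ∈ S.grade i → α a ∈ S.grade i
  commute_partial : ∀ a : L, α ((X : Polynomial ℂ) • a) = (X : Polynomial ℂ) • α a
  skew : ∀ (i j : ZMod 2) (a b : L), a ∈ S.grade i → b ∈ S.grade j →
    ∀ lam : ℂ, br.mul lam a b = -(sgn i j • br.cmul lam b a)
  homJacobi : ∀ (i j : ZMod 2) (a b : L), a ∈ S.grade i → b ∈ S.grade j →
    ∀ (c : L) (lam mu : ℂ),
      br.mul lam (α a) (br.mul mu b c) =
        br.mul (lam + mu) (br.mul lam a b) (α c) + sgn i j • br.mul mu (α b) (br.mul lam a c)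

/-- `(L, S, p)` is a left-symmetric conformal superalgebra. -/
structure IsLeftSymmetric (S : SuperModule L) (p : ConformalProduct L)
    extends IsLambdaProduct S p : Prop where
  leftSym : ∀ (i j : ZMod 2) (a b : L), a ∈ S.grade i → b ∈ S.grade j →
    ∀ (c : L) (lam mu : ℂ),
      p.mul (lam + mu) (p.mul lam a b) c - p.mul lam a (p.mul mu b c) =
        sgn i j • (p.mul (lam + mu) (p.mul mu b a) c - p.mul mu b (p.mul lam a c))

/-- `(L, S, p)` is a (left) Novikov conformal superalgebra. -/
structure IsNovikov (S : SuperModule L) (p : ConformalProduct L)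
    extends IsLeftSymmetric S p : Prop where
  novikov : ∀ (j k : ZMod 2) (b c : L), b ∈ S.grade j → c ∈ S.grade k →
    ∀ (a : L) (lam mu : ℂ),
      p.mul (lam + mu) (p.mul lam a b) c = sgn j k • p.cmul mu (p.mul lam a c) b

/-- `(L, S, mc, p)` is a Novikov-Poisson conformal superalgebra. -/
structure IsNovikovPoisson (S : SuperModule L) (mc p : ConformalProduct L) : Prop where
  commAssoc : IsCommAssoc S mc
  novikov : IsNovikov S p
  compat₁ : ∀ (lam mu : ℂ) (a b c : L),
    p.mul (lam + mu) (mc.mul lam a b) c = mc.mul lam a (p.mul mu b c)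
  compat₂ : ∀ (i j : ZMod 2) (a b : L), a ∈ S.grade i → b ∈ S.grade j →
    ∀ (c : L) (lam mu : ℂ),
      mc.mul (lam + mu) (p.mul lam a b) c - p.mul lam a (mc.mul mu b c) =
        sgn i j • (mc.mul (lam + mu) (p.mul mu b a) c - p.mul mu b (mc.mul lam a c))

/-- `(L, S, mc, p)` is a pre-Lie commutative conformal superalgebra. -/
structure IsPreLieComm (S : SuperModule L) (mc p : ConformalProduct L) : Prop where
  commAssoc : IsCommAssoc S mc
  leftSymmetric : IsLeftSymmetric S p
  compat : ∀ (i j : ZMod 2) (a b : L), a ∈ S.grade i → b ∈ S.grade j →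
    ∀ (c : L) (lam mu : ℂ),
      p.mul lam a (mc.mul mu b c) =
        mc.mul (lam + mu) (p.mul lam a b) c + sgn i j • mc.mul mu b (p.mul lam a c)

/-- `(L, S, mc, p)` is a pre-Lie Poisson conformal superalgebra. -/
structure IsPreLiePoisson (S : SuperModule L) (mc p : ConformalProduct L) : Prop where
  commAssoc : IsCommAssoc S mc
  leftSymmetric : IsLeftSymmetric S p
  compat₁ : ∀ (lam mu : ℂ) (a b c : L),
    p.mul (lam + mu) (mc.mul lam a b) c = mc.mul lam a (p.mul mu b c)
  compat₂ : ∀ (i j : ZMod 2) (a b : L), a ∈ S.grade i → b ∈ S.grade j →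
    ∀ (c : L) (lam mu : ℂ),
      mc.mul (lam + mu) (p.mul lam a b) c - p.mul lam a (mc.mul mu b c) =
        sgn i j • (mc.mul (lam + mu) (p.mul mu b a) c - p.mul mu b (mc.mul lam a c))

/-!
Specialising the transposed Leibniz rule to `a = h` and `λ = 0` shows that `α = h ∘_(0) -` is a
half-derivation of the bracket: `2 α [x_ν y] = [α x_ν y] + [x_ν α y]`. Applying this twice to each
term of the Jacobi identity for `(a, b, c)` expresses `4 α` of it through brackets in which `α`
hits one of `a, b, c`; the Jacobi identities for `(α a, b, c)`, `(a, α b, c)` and `(a, b, α c)`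
then cancel everything except the Hom-Jacobi identity.
-/

section

omit [IsScalarTower ℂ ℂ[X] L]

namespace ConformalProduct

omit [Module ℂ[X] L]

variable (m : ConformalProduct L)

lemma hasFiniteSupport_smul_coeff (lam : ℂ) (a b : L) :
    Function.HasFiniteSupport fun n => lam ^ n • m.coeff n a b := by
  obtain ⟨N, hN⟩ := m.coeff_finite a b
  refine (Set.finite_Iio N).subset fun n hn => Set.mem_Iio.mpr <| not_le.mp fun hnN => hn ?_
  simp only [hN n hnN, smul_zero]

lemma mul_zero_eq_coeff (a b : L) : m.mul 0 a b = m.coeff 0 a b := by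
  rw [ConformalProduct.mul, finsum_eq_single _ 0 fun n hn => by rw [zero_pow hn, zero_smul],
    pow_zero, one_smul]

lemma mul_add_left (lam : ℂ) (x y b : L) :
    m.mul lam (x + y) b = m.mul lam x b + m.mul lam y b := by
  simp only [ConformalProduct.mul, map_add, LinearMap.add_apply, smul_add]
  exact finsum_add_distrib (m.hasFiniteSupport_smul_coeff lam x b)
    (m.hasFiniteSupport_smul_coeff lam y b)

lemma mul_add_right (lam : ℂ) (a x y : L) :
    m.mul lam a (x + y) = m.mul lam a x + m.mul lam a y := by
  simp only [ConformalProduct.mul, map_add, smul_add]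
  exact finsum_add_distrib (m.hasFiniteSupport_smul_coeff lam a x)
    (m.hasFiniteSupport_smul_coeff lam a y)

lemma mul_smul_left (lam c : ℂ) (x b : L) : m.mul lam (c • x) b = c • m.mul lam x b := by
  simp only [ConformalProduct.mul, map_smul, LinearMap.smul_apply, smul_finsum]
  exact finsum_congr fun n => smul_comm _ _ _

lemma mul_smul_right (lam c : ℂ) (a x : L) : m.mul lam a (c • x) = c • m.mul lam a x := by
  simp only [ConformalProduct.mul, map_smul, smul_finsum]
  exact finsum_congr fun n => smul_comm _ _ _

end ConformalProduct

lemma IsLambdaProduct.mul_mem {S : SuperModule L} {m : ConformalProduct L}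
    (hm : IsLambdaProduct S m) {i j : ZMod 2} {a b : L}
    (ha : a ∈ S.grade i) (hb : b ∈ S.grade j) (lam : ℂ) :
    m.mul lam a b ∈ S.grade (i + j) := by
  rw [ConformalProduct.mul, finsum_eq_sum _ (m.hasFiniteSupport_smul_coeff lam a b)]
  exact Submodule.sum_mem _ fun n _ => Submodule.smul_mem _ _ (hm.even i j a b ha hb n)

def IsHalfDerivation (S : SuperModule L) (br : ConformalProduct L) (α : L →ₗ[ℂ] L) : Prop :=
  ∀ (k : ZMod 2) (x : L), x ∈ S.grade k → ∀ (y : L) (ν : ℂ),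
    (2 : ℂ) • α (br.mul ν x y) = br.mul ν (α x) y + br.mul ν x (α y)

namespace IsHalfDerivation

variable {S : SuperModule L} {br : ConformalProduct L} {α : L →ₗ[ℂ] L} {i j : ZMod 2} {x y : L}

lemma four_smul_apply_mul_mul_right (hα : IsHalfDerivation S br α) (hx : x ∈ S.grade i)
    (hy : y ∈ S.grade j) (z : L) (lam mu : ℂ) :
    (4 : ℂ) • α (br.mul lam x (br.mul mu y z)) =
      (2 : ℂ) • br.mul lam (α x) (br.mul mu y z) + br.mul lam x (br.mul mu (α y) z) +
        br.mul lam x (br.mul mu y (α z)) := by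
  calc (4 : ℂ) • α (br.mul lam x (br.mul mu y z))
      = (2 : ℂ) • ((2 : ℂ) • α (br.mul lam x (br.mul mu y z))) := by
        rw [smul_smul]; norm_num
    _ = (2 : ℂ) • br.mul lam (α x) (br.mul mu y z) +
          br.mul lam x ((2 : ℂ) • α (br.mul mu y z)) := by
        rw [hα i x hx, smul_add, br.mul_smul_right]
    _ = _ := by rw [hα j y hy, br.mul_add_right, add_assoc]

lemma four_smul_apply_mul_mul_left (hα : IsHalfDerivation S br α) (hbr : IsLambdaProduct S br)
    (hx : x ∈ S.grade i) (hy : y ∈ S.grade j) (z : L) (lam nu : ℂ) :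
    (4 : ℂ) • α (br.mul nu (br.mul lam x y) z) =
      br.mul nu (br.mul lam (α x) y) z + br.mul nu (br.mul lam x (α y)) z +
        (2 : ℂ) • br.mul nu (br.mul lam x y) (α z) := by
  calc (4 : ℂ) • α (br.mul nu (br.mul lam x y) z)
      = (2 : ℂ) • ((2 : ℂ) • α (br.mul nu (br.mul lam x y) z)) := by
        rw [smul_smul]; norm_num
    _ = br.mul nu ((2 : ℂ) • α (br.mul lam x y)) z +
          (2 : ℂ) • br.mul nu (br.mul lam x y) (α z) := by
        rw [hα (i + j) _ (hbr.mul_mem hx hy lam), smul_add, br.mul_smul_left]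
    _ = _ := by rw [hα i x hx, br.mul_add_left]

end IsHalfDerivation

lemma IsTPCSA.isHalfDerivation_coeff_zero {S : SuperModule L} {m br : ConformalProduct L}
    (hT : IsTPCSA S m br) {h : L} (hh : h ∈ S.grade 0) :
    IsHalfDerivation S br (m.coeff 0 h) := by
  intro k x hx y ν
  simpa [sgn, ConformalProduct.mul_zero_eq_coeff] using
    hT.transposedLeibniz 0 k h x hh hx y 0 ν

namespace IsLie

variable {S : SuperModule L} {br : ConformalProduct L} (hL : IsLie S br) {α : L →ₗ[ℂ] L}
  (hgrade : ∀ (i : ZMod 2) (a : L), a ∈ S.grade i → α a ∈ S.grade i)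
  (hα : IsHalfDerivation S br α)
include hL hgrade hα

lemma homJacobi_of_isHalfDerivation {i j : ZMod 2} {a b : L}
    (ha : a ∈ S.grade i) (hb : b ∈ S.grade j) (c : L) (lam mu : ℂ) :
    br.mul lam (α a) (br.mul mu b c) =
      br.mul (lam + mu) (br.mul lam a b) (α c) + sgn i j • br.mul mu (α b) (br.mul lam a c) := by
  have hD := hα.four_smul_apply_mul_mul_right ha hb c lam mu
  have hU := hα.four_smul_apply_mul_mul_left hL.toIsLambdaProduct ha hb c lam (lam + mu)
  have hV := hα.four_smul_apply_mul_mul_right hb ha c mu lam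
  have hJ := congrArg α (hL.jacobi i j a b ha hb c lam mu)
  rw [map_add, map_smul] at hJ
  have j₁ := hL.jacobi i j (α a) b (hgrade i a ha) hb c lam mu
  have j₂ := hL.jacobi i j a (α b) ha (hgrade j b hb) c lam mu
  have j₃ := hL.jacobi i j a b ha hb (α c) lam mu
  linear_combination (norm := module) (4 : ℂ) • hJ - hD + hU + sgn i j • hV - j₁ - j₂ - j₃

lemma isHomLie_of_isHalfDerivation (hX : ∀ a : L, α ((X : ℂ[X]) • a) = (X : ℂ[X]) • α a) :
    IsHomLie S br α where
  toIsLambdaProduct := hL.toIsLambdaProduct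
  map_smul_add c a b := by rw [map_add, map_smul]
  map_grade := hgrade
  commute_partial := hX
  skew := hL.skew
  homJacobi _ _ _ _ ha hb := hL.homJacobi_of_isHalfDerivation hgrade hα ha hb

end IsLie

end

/-- for an even element `h` of a transposed Poisson conformal superalgebra,
`(L, [·_λ·], α_h)` with `α_h x = h ∘_(0) x = (h ∘_λ x)|_{λ=0}` is a Hom-Lie conformal
superalgebra. -/
theorem statement_8 (S : SuperModule L) (m br : ConformalProduct L)
    (hT : IsTPCSA S m br) (h : L) (hh : h ∈ S.grade 0) :
    IsHomLie S br (fun x => m.mul 0 h x) := by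
  have hα : (fun x => m.mul 0 h x) = m.coeff 0 h := funext (m.mul_zero_eq_coeff h)
  rw [hα]
  refine hT.lie.isHomLie_of_isHalfDerivation (fun i a ha => ?_) (hT.isHalfDerivation_coeff_zero hh)
    fun a => ?_
  · simpa [m.mul_zero_eq_coeff] using hT.commAssoc.mul_mem hh ha 0
  · simpa [m.mul_zero_eq_coeff] using hT.commAssoc.sesq_right 0 h a

end TPCSAFormal
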